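/- (Lemma 6.5, second part) Suppose G carries an orientation such that K(v) > 0 for every v ∈ V (hence K_comb(v) > 0 for all v). Then (liminf_{v ∈ V} K_comb(v))/ℓ*_ess(G) ≤ α_ess(G) ≤ 2/ℓ*_ess(G), as inequalities in [0,∞] with the convention 1/0 = +∞. -/

import Mathlib

open scoped Classical ENNReal
open MeasureTheory

noncomputable section

/-- A real function on `[0, L]` which is continuous and piecewise continuously
differentiable: there is a finite partition `0 = x 0 < x 1 < ... < x n = L` such that
on each closed piece the function has a continuous derivative. -/
def PiecewiseC1 (f : ℝ → ℝ) (L : ℝ) : Prop :=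
  ContinuousOn f (Set.Icc 0 L) ∧
  ∃ (n : ℕ) (x : Fin (n + 1) → ℝ), x 0 = 0 ∧ x (Fin.last n) = L ∧ StrictMono x ∧
    ∀ i : Fin n, ∃ g : ℝ → ℝ,
      ContinuousOn g (Set.Icc (x i.castSucc) (x i.succ)) ∧
      ∀ t ∈ Set.Icc (x i.castSucc) (x i.succ),
        HasDerivWithinAt f (g t) (Set.Icc (x i.castSucc) (x i.succ)) t

/-- The underlying (unoriented) simple graph of a set of edges `E` with endpoint
map `ends : E → V × V`. -/
def graphOf {V E : Type} (ends : E → V × V) : SimpleGraph V :=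
  SimpleGraph.fromRel fun u v => ∃ e, ends e = (u, v)

/-- A metric graph: a connected, locally finite, simple combinatorial graph with
countably infinite vertex and edge sets, each edge having a finite positive length.
Each edge carries an (auxiliary) orientation given by `ends`. -/
structure MetricGraph : Type 1 where
  V : Type
  E : Type
  countV : Countable V
  infV : Infinite V
  countE : Countable E
  infE : Infinite E
  ends : E → V × V
  len : E → ℝ
  len_pos : ∀ e, 0 < len e
  no_loops : ∀ e, (ends e).1 ≠ (ends e).2
  no_multi : Function.Injective fun e => Sym2.mk (ends e)
  locfin : ∀ v, {e | (ends e).1 = v ∨ (ends e).2 = v}.Finite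
  conn : (graphOf ends).Connected

namespace MetricGraph

/-- The underlying simple graph. -/
def graph (Γ : MetricGraph) : SimpleGraph Γ.V := graphOf Γ.ends

/-- The star of a vertex: the set of edges incident to it. -/
def star (Γ : MetricGraph) (v : Γ.V) : Set Γ.E :=
  {e | (Γ.ends e).1 = v ∨ (Γ.ends e).2 = v}

/-- Combinatorial degree of a vertex. -/
def degree (Γ : MetricGraph) (v : Γ.V) : ℕ := (Γ.locfin v).toFinset.card

/-- The vertices of a (finite) subgraph given by a finite set of edges. -/
def vertsOf (Γ : MetricGraph) (F : Finset Γ.E) : Finset Γ.V :=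
  F.image (fun e => (Γ.ends e).1) ∪ F.image fun e => (Γ.ends e).2

/-- The degree of a vertex inside the subgraph given by the edge set `F`. -/
def degIn (Γ : MetricGraph) (F : Finset Γ.E) (v : Γ.V) : ℕ :=
  (F.filter fun e => (Γ.ends e).1 = v ∨ (Γ.ends e).2 = v).card

/-- Connectedness of the subgraph spanned by the edge set `F`. -/
def SubConn (Γ : MetricGraph) (F : Finset Γ.E) : Prop :=
  ((SimpleGraph.fromRel fun u v => ∃ e ∈ F, Γ.ends e = (u, v)).induce
    (↑(Γ.vertsOf F) : Set Γ.V)).Connected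

/-- A finite connected subgraph (with at least one edge), given by its edge set. -/
def IsFinSubgraph (Γ : MetricGraph) (F : Finset Γ.E) : Prop :=
  F.Nonempty ∧ Γ.SubConn F

/-- The boundary of a finite subgraph with respect to `Γ`: the vertices whose degree
in the subgraph is strictly smaller than the degree in `Γ`. -/
def bdry (Γ : MetricGraph) (F : Finset Γ.E) : Finset Γ.V :=
  (Γ.vertsOf F).filter fun v => Γ.degIn F v < Γ.degree v

/-- `deg (∂_G G̃)`. -/
def degBdry (Γ : MetricGraph) (F : Finset Γ.E) : ℝ :=
  ∑ v ∈ Γ.bdry F, (Γ.degIn F v : ℝ)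

/-- The total length (Lebesgue measure) of a finite subgraph. -/
def mes (Γ : MetricGraph) (F : Finset Γ.E) : ℝ := ∑ e ∈ F, Γ.len e

/-- The isoperimetric (Cheeger) constant of a metric graph. -/
def alpha (Γ : MetricGraph) : ℝ :=
  sInf {r : ℝ | ∃ F : Finset Γ.E, Γ.IsFinSubgraph F ∧ r = Γ.degBdry F / Γ.mes F}

/-- The isoperimetric constant at infinity, as an element of `[0,∞]`. -/
def alphaEssEnn (Γ : MetricGraph) : ℝ≥0∞ :=
  ⨆ W : Finset Γ.E, ⨅ (F : Finset Γ.E) (_ : Γ.IsFinSubgraph F ∧ Disjoint F W),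
    ENNReal.ofReal (Γ.degBdry F / Γ.mes F)

/-- The vertex weight `m(v) = Σ_{e ∈ E_v} |e|`. -/
def mweight (Γ : MetricGraph) (v : Γ.V) : ℝ :=
  ∑ e ∈ (Γ.locfin v).toFinset, Γ.len e

/-- The set of boundary edges of a vertex set: edges with exactly one endpoint in `X`. -/
def Eb (Γ : MetricGraph) (X : Set Γ.V) : Set Γ.E :=
  {e | Xor' ((Γ.ends e).1 ∈ X) ((Γ.ends e).2 ∈ X)}

/-- The discrete isoperimetric constant of a vertex set `U`. -/
def alphaD (Γ : MetricGraph) (U : Set Γ.V) : ℝ :=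
  sInf {r : ℝ | ∃ X : Finset Γ.V, ↑X ⊆ U ∧ X.Nonempty ∧
    r = ((Γ.Eb ↑X).ncard : ℝ) / ∑ v ∈ X, Γ.mweight v}

/-- The discrete isoperimetric constant at infinity, as an element of `[0,∞]`. -/
def alphaDEssEnn (Γ : MetricGraph) : ℝ≥0∞ :=
  ⨆ X : Finset Γ.V, ENNReal.ofReal (Γ.alphaD (↑X : Set Γ.V)ᶜ)

/-- The combinatorial isoperimetric constant. -/
def alphaComb (Γ : MetricGraph) : ℝ :=
  sInf {r : ℝ | ∃ X : Finset Γ.V, X.Nonempty ∧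
    r = ((Γ.Eb ↑X).ncard : ℝ) / ∑ v ∈ X, (Γ.degree v : ℝ)}

/-- `ℓ*(G) = sup of edge lengths`. -/
def ellSup (Γ : MetricGraph) : ℝ := sSup (Set.range Γ.len)

/-- `ℓ_*(G) = inf of edge lengths`. -/
def ellInf (Γ : MetricGraph) : ℝ := sInf (Set.range Γ.len)

/-- `ℓ*(G)` as an element of `[0,∞]`. -/
def ellSupEnn (Γ : MetricGraph) : ℝ≥0∞ := ⨆ e : Γ.E, ENNReal.ofReal (Γ.len e)

/-- `ℓ*_ess(G) = inf_F sup_{e ∉ F} |e|` as an element of `[0,∞]`. -/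
def ellSupEssEnn (Γ : MetricGraph) : ℝ≥0∞ :=
  ⨅ W : Finset Γ.E, ⨆ e : {e : Γ.E // e ∉ W}, ENNReal.ofReal (Γ.len (e : Γ.E))

/-- Outgoing edges at a vertex (for the fixed orientation). -/
def plusE (Γ : MetricGraph) (v : Γ.V) : Set Γ.E := {e | (Γ.ends e).1 = v}

/-- Incoming edges at a vertex (for the fixed orientation). -/
def minusE (Γ : MetricGraph) (v : Γ.V) : Set Γ.E := {e | (Γ.ends e).2 = v}

/-- The curvature `K(v) = ((#E_v⁺ − #E_v⁻)/#E_v⁺) · inf_{e ∈ E_v⁺} 1/|e|`. -/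
def Kcurv (Γ : MetricGraph) (v : Γ.V) : ℝ :=
  (((Γ.plusE v).ncard : ℝ) - ((Γ.minusE v).ncard : ℝ)) / ((Γ.plusE v).ncard : ℝ) *
    sInf ((fun e => 1 / Γ.len e) '' Γ.plusE v)

/-- The combinatorial curvature `K_comb(v) = 1 − #E_v⁻/#E_v⁺`. -/
def Kcomb (Γ : MetricGraph) (v : Γ.V) : ℝ :=
  1 - ((Γ.minusE v).ncard : ℝ) / ((Γ.plusE v).ncard : ℝ)

/-- `liminf_{v ∈ V} K(v) = sup over finite W of inf_{v ∉ W} K(v)`, in `[0,∞]`. -/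
def KcurvEssEnn (Γ : MetricGraph) : ℝ≥0∞ :=
  ⨆ W : Finset Γ.V, ⨅ v : {v : Γ.V // v ∉ W}, ENNReal.ofReal (Γ.Kcurv (v : Γ.V))

/-- `liminf_{v ∈ V} K_comb(v) = sup over finite W of inf_{v ∉ W} K_comb(v)`. -/
def KcombLiminf (Γ : MetricGraph) : ℝ :=
  sSup (Set.range fun W : Finset Γ.V => sInf (Γ.Kcomb '' (↑W : Set Γ.V)ᶜ))

/-- The value of an edgewise function at an endpoint of an edge. -/
def endVal (Γ : MetricGraph) (f : Γ.E → ℝ → ℝ) (e : Γ.E) (v : Γ.V) : ℝ :=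
  if (Γ.ends e).1 = v then f e 0 else f e (Γ.len e)

/-- A test function on the metric graph `Γ`: a family of continuous, piecewise `C¹`
functions on the edges, matching at the vertices, vanishing on all but finitely
many edges. -/
structure TestFun (Γ : MetricGraph) where
  f : Γ.E → ℝ → ℝ
  piecewise : ∀ e, PiecewiseC1 (f e) (Γ.len e)
  vertexCont : ∀ e e' : Γ.E, ∀ v : Γ.V, e ∈ Γ.star v → e' ∈ Γ.star v →
    Γ.endVal f e v = Γ.endVal f e' v
  finSupp : {e : Γ.E | ∃ x ∈ Set.Icc 0 (Γ.len e), f e x ≠ 0}.Finite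

/-- `‖f‖² = Σ_e ∫₀^{|e|} f_e(x)² dx`. -/
def TestFun.normSq {Γ : MetricGraph} (φ : TestFun Γ) : ℝ :=
  ∑ᶠ e : Γ.E, ∫ x in (0:ℝ)..Γ.len e, (φ.f e x) ^ 2

/-- `‖f′‖² = Σ_e ∫₀^{|e|} f_e′(x)² dx`. -/
def TestFun.energySq {Γ : MetricGraph} (φ : TestFun Γ) : ℝ :=
  ∑ᶠ e : Γ.E, ∫ x in (0:ℝ)..Γ.len e, (deriv (φ.f e) x) ^ 2

/-- A test function is nonzero if it does not vanish identically on the graph. -/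
def TestFun.Nonzero {Γ : MetricGraph} (φ : TestFun Γ) : Prop :=
  ∃ e : Γ.E, ∃ x ∈ Set.Icc 0 (Γ.len e), φ.f e x ≠ 0

/-- The bottom of the spectrum of the Kirchhoff Laplacian, via the variational
(Rayleigh quotient) characterization. -/
def lambda0 (Γ : MetricGraph) : ℝ :=
  sInf {r : ℝ | ∃ φ : TestFun Γ, φ.Nonzero ∧ r = φ.energySq / φ.normSq}

end MetricGraph

/-- A weighted graph `(V, m, b)`: a connected, locally finite, simple combinatorial
graph with countably infinite vertex and edge sets, an edge weight `b` and a vertex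
weight `m`. -/
structure WeightedGraph : Type 1 where
  V : Type
  E : Type
  countV : Countable V
  infV : Infinite V
  countE : Countable E
  infE : Infinite E
  ends : E → V × V
  no_loops : ∀ e, (ends e).1 ≠ (ends e).2
  no_multi : Function.Injective fun e => Sym2.mk (ends e)
  locfin : ∀ v, {e | (ends e).1 = v ∨ (ends e).2 = v}.Finite
  conn : (graphOf ends).Connected
  b : E → ℝ
  b_pos : ∀ e, 0 < b e
  m : V → ℝ
  m_pos : ∀ v, 0 < m v

namespace WeightedGraph

/-- An edge weight `d` is intrinsic if `Σ_{e ∈ E_v} d(e)² b(e) ≤ m(v)` for all `v`. -/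
def Intrinsic (Γ : WeightedGraph) (d : Γ.E → ℝ) : Prop :=
  ∀ v, ∑ e ∈ (Γ.locfin v).toFinset, d e ^ 2 * Γ.b e ≤ Γ.m v

/-- The boundary edges of a vertex set: edges with exactly one endpoint in `X`. -/
def Eb (Γ : WeightedGraph) (X : Set Γ.V) : Set Γ.E :=
  {e | Xor' ((Γ.ends e).1 ∈ X) ((Γ.ends e).2 ∈ X)}

/-- The discrete isoperimetric constant `α_d(U)` with respect to the weight `d`. -/
def alphaD (Γ : WeightedGraph) (d : Γ.E → ℝ) (U : Set Γ.V) : ℝ :=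
  sInf {r : ℝ | ∃ X : Finset Γ.V, ↑X ⊆ U ∧ X.Nonempty ∧
    r = (∑ᶠ e ∈ Γ.Eb ↑X, d e * Γ.b e) / ∑ v ∈ X, Γ.m v}

/-- The discrete isoperimetric constant at infinity, in `[0,∞]`. -/
def alphaDEssEnn (Γ : WeightedGraph) (d : Γ.E → ℝ) : ℝ≥0∞ :=
  ⨆ X : Finset Γ.V, ENNReal.ofReal (Γ.alphaD d (↑X : Set Γ.V)ᶜ)

/-- The energy form `Q(u) = Σ_e b(e) (u(e_i) − u(e_0))²`. -/
def Q (Γ : WeightedGraph) (u : Γ.V → ℝ) : ℝ :=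
  ∑ᶠ e : Γ.E, Γ.b e * (u (Γ.ends e).2 - u (Γ.ends e).1) ^ 2

/-- The squared norm `Σ_v m(v) u(v)²`. -/
def normSqD (Γ : WeightedGraph) (u : Γ.V → ℝ) : ℝ :=
  ∑ᶠ v : Γ.V, Γ.m v * u v ^ 2

/-- The bottom of the spectrum of the Friedrichs extension of the weighted Laplacian,
via the variational characterization over finitely supported functions. -/
def lambda0 (Γ : WeightedGraph) : ℝ :=
  sInf {r : ℝ | ∃ u : Γ.V → ℝ, (Function.support u).Finite ∧ u ≠ 0 ∧
    r = Γ.Q u / Γ.normSqD u}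

/-- The bottom of the essential spectrum of the Friedrichs extension, via Glazman's
decomposition principle, in `[0,∞]`. -/
def lambda0EssEnn (Γ : WeightedGraph) : ℝ≥0∞ :=
  ⨆ X : Finset Γ.V, ⨅ (u : Γ.V → ℝ)
    (_ : (Function.support u).Finite ∧ u ≠ 0 ∧ ∀ v ∈ X, u v = 0),
      ENNReal.ofReal (Γ.Q u / Γ.normSqD u)

end WeightedGraph

end

/-! Under the orientation every vertex has an outgoing edge. In a finite subgraph `Y` the
out-degrees and the in-degrees (counted inside `Y`) both sum to `#Y`. At an interior vertex `v`
the whole star of `v` lies in `Y`, so `out(v) - in(v) = K_comb(v) · out(v)`; at a boundary vertex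
`out(v) - in(v) + deg_Y(v) = 2 out(v)`. Summing, `c · #Y ≤ deg ∂Y` as soon as `K_comb ≥ c` on `Y`,
and `mes Y ≤ ℓ · #Y` if no edge of `Y` is longer than `ℓ`. Subgraphs avoiding the edges at a
finite vertex set and a finite edge set therefore have ratio at least `c / ℓ`. Conversely, a
single edge `e` has `deg ∂ ≤ 2` and measure `|e|`, which gives the upper bound. -/

namespace MetricGraph

variable (Γ : MetricGraph)

noncomputable def outDegIn (F : Finset Γ.E) (v : Γ.V) : ℕ :=
  (F.filter fun e => (Γ.ends e).1 = v).card

noncomputable def inDegIn (F : Finset Γ.E) (v : Γ.V) : ℕ :=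
  (F.filter fun e => (Γ.ends e).2 = v).card

lemma plusE_finite (v : Γ.V) : (Γ.plusE v).Finite :=
  (Γ.locfin v).subset fun _ he => Or.inl he

lemma Kcomb_le_one (v : Γ.V) : Γ.Kcomb v ≤ 1 :=
  sub_le_self _ (by positivity)

lemma sInf_Kcomb_compl_le_one (W : Finset Γ.V) : sInf (Γ.Kcomb '' (↑W : Set Γ.V)ᶜ) ≤ 1 := by
  by_cases hbdd : BddBelow (Γ.Kcomb '' (↑W : Set Γ.V)ᶜ)
  · have := Γ.infV
    obtain ⟨v, hv⟩ := W.exists_notMem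
    exact (csInf_le hbdd ⟨v, by simpa using hv, rfl⟩).trans (Γ.Kcomb_le_one v)
  · rw [Real.sInf_of_not_bddBelow hbdd]
    exact zero_le_one

lemma degBdry_nonneg (F : Finset Γ.E) : 0 ≤ Γ.degBdry F :=
  Finset.sum_nonneg fun _ _ => Nat.cast_nonneg _

lemma exists_mem_star_of_mem_vertsOf {F : Finset Γ.E} {v : Γ.V} (hv : v ∈ Γ.vertsOf F) :
    ∃ e ∈ F, e ∈ Γ.star v := by
  simp only [vertsOf, Finset.mem_union, Finset.mem_image] at hv
  rcases hv with ⟨e, he, rfl⟩ | ⟨e, he, rfl⟩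
  exacts [⟨e, he, Or.inl rfl⟩, ⟨e, he, Or.inr rfl⟩]

lemma sum_outDegIn_vertsOf (F : Finset Γ.E) : ∑ v ∈ Γ.vertsOf F, Γ.outDegIn F v = F.card :=
  (Finset.card_eq_sum_card_fiberwise fun _ he =>
    Finset.mem_union_left _ (Finset.mem_image_of_mem _ he)).symm

lemma sum_inDegIn_vertsOf (F : Finset Γ.E) : ∑ v ∈ Γ.vertsOf F, Γ.inDegIn F v = F.card :=
  (Finset.card_eq_sum_card_fiberwise fun _ he =>
    Finset.mem_union_right _ (Finset.mem_image_of_mem _ he)).symm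

lemma degIn_eq_outDegIn_add_inDegIn (F : Finset Γ.E) (v : Γ.V) :
    Γ.degIn F v = Γ.outDegIn F v + Γ.inDegIn F v := by
  rw [degIn, Finset.filter_or, Finset.card_union_of_disjoint]
  · rfl
  · exact Finset.disjoint_filter.mpr fun e _ h1 h2 => Γ.no_loops e (h1.trans h2.symm)

lemma degBdry_le_two_mul_card (F : Finset Γ.E) : Γ.degBdry F ≤ 2 * F.card := by
  calc Γ.degBdry F ≤ ∑ v ∈ Γ.vertsOf F, (Γ.degIn F v : ℝ) :=
        Finset.sum_le_sum_of_subset_of_nonneg (Finset.filter_subset _ _)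
          fun _ _ _ => Nat.cast_nonneg _
    _ = 2 * F.card := by
        simp only [degIn_eq_outDegIn_add_inDegIn, Nat.cast_add, Finset.sum_add_distrib,
          ← Nat.cast_sum, sum_outDegIn_vertsOf, sum_inDegIn_vertsOf]
        ring

lemma mem_of_degree_le_degIn {F : Finset Γ.E} {v : Γ.V} (hv : Γ.degree v ≤ Γ.degIn F v)
    {e : Γ.E} (he : e ∈ Γ.star v) : e ∈ F := by
  have hstar : F.filter (fun e => (Γ.ends e).1 = v ∨ (Γ.ends e).2 = v) =
      (Γ.locfin v).toFinset :=
    Finset.eq_of_subset_of_card_le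
      (fun e he => (Γ.locfin v).mem_toFinset.mpr (Finset.mem_filter.mp he).2) hv
  have he' : e ∈ (Γ.locfin v).toFinset := (Γ.locfin v).mem_toFinset.mpr he
  rw [← hstar] at he'
  exact (Finset.mem_filter.mp he').1

lemma ncard_plusE_of_degree_le_degIn {F : Finset Γ.E} {v : Γ.V}
    (hv : Γ.degree v ≤ Γ.degIn F v) : (Γ.plusE v).ncard = Γ.outDegIn F v := by
  rw [outDegIn, ← Set.ncard_coe_finset, Finset.coe_filter]
  congr 1
  ext e
  exact ⟨fun he => ⟨Γ.mem_of_degree_le_degIn hv (Or.inl he), he⟩, And.right⟩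

lemma ncard_minusE_of_degree_le_degIn {F : Finset Γ.E} {v : Γ.V}
    (hv : Γ.degree v ≤ Γ.degIn F v) : (Γ.minusE v).ncard = Γ.inDegIn F v := by
  rw [inDegIn, ← Set.ncard_coe_finset, Finset.coe_filter]
  congr 1
  ext e
  exact ⟨fun he => ⟨Γ.mem_of_degree_le_degIn hv (Or.inr he), he⟩, And.right⟩

lemma mul_outDegIn_le_of_degree_le_degIn {F : Finset Γ.E} {v : Γ.V}
    (hv : Γ.degree v ≤ Γ.degIn F v) (hplus : (Γ.plusE v).Nonempty) {c : ℝ}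
    (hc : c ≤ Γ.Kcomb v) :
    c * Γ.outDegIn F v ≤ (Γ.outDegIn F v : ℝ) - Γ.inDegIn F v := by
  rw [Kcomb, Γ.ncard_plusE_of_degree_le_degIn hv, Γ.ncard_minusE_of_degree_le_degIn hv] at hc
  have hpos : (0 : ℝ) < Γ.outDegIn F v := by
    rw [← Γ.ncard_plusE_of_degree_le_degIn hv]
    exact_mod_cast (Set.ncard_pos (Γ.plusE_finite v)).mpr hplus
  calc c * Γ.outDegIn F v ≤ (1 - Γ.inDegIn F v / Γ.outDegIn F v) * Γ.outDegIn F v :=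
        mul_le_mul_of_nonneg_right hc hpos.le
    _ = (Γ.outDegIn F v : ℝ) - Γ.inDegIn F v := by field_simp

lemma mul_card_le_degBdry {F : Finset Γ.E} (hplus : ∀ v ∈ Γ.vertsOf F, (Γ.plusE v).Nonempty)
    {c : ℝ} (hc : ∀ v ∈ Γ.vertsOf F, c ≤ Γ.Kcomb v) : c * F.card ≤ Γ.degBdry F := by
  have hvertex : ∀ v ∈ Γ.vertsOf F, c * Γ.outDegIn F v ≤
      ((Γ.outDegIn F v : ℝ) - Γ.inDegIn F v) +
        if Γ.degIn F v < Γ.degree v then (Γ.degIn F v : ℝ) else 0 := by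
    intro v hv
    split_ifs with hbdry
    · have hc1 : c * Γ.outDegIn F v ≤ Γ.outDegIn F v :=
        mul_le_of_le_one_left (Nat.cast_nonneg _) ((hc v hv).trans (Γ.Kcomb_le_one v))
      rw [degIn_eq_outDegIn_add_inDegIn, Nat.cast_add]
      linarith [Nat.cast_nonneg (α := ℝ) (Γ.inDegIn F v)]
    · rw [add_zero]
      exact Γ.mul_outDegIn_le_of_degree_le_degIn (not_lt.mp hbdry) (hplus v hv) (hc v hv)
  calc c * F.card = ∑ v ∈ Γ.vertsOf F, c * Γ.outDegIn F v := by
        rw [← Finset.mul_sum, ← Nat.cast_sum, sum_outDegIn_vertsOf]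
    _ ≤ _ := Finset.sum_le_sum hvertex
    _ = Γ.degBdry F := by
        rw [Finset.sum_add_distrib, Finset.sum_sub_distrib, ← Nat.cast_sum, ← Nat.cast_sum,
          sum_outDegIn_vertsOf, sum_inDegIn_vertsOf, sub_self, zero_add, degBdry, bdry,
          Finset.sum_filter]

lemma ofReal_div_le_ofReal_degBdry_div_mes {F : Finset Γ.E} (hF : F.Nonempty)
    (hplus : ∀ v ∈ Γ.vertsOf F, (Γ.plusE v).Nonempty) {c : ℝ}
    (hc : ∀ v ∈ Γ.vertsOf F, c ≤ Γ.Kcomb v) {S : ℝ≥0∞}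
    (hS : ∀ e ∈ F, ENNReal.ofReal (Γ.len e) ≤ S) :
    ENNReal.ofReal c / S ≤ ENNReal.ofReal (Γ.degBdry F / Γ.mes F) := by
  rcases eq_or_ne S ⊤ with rfl | hStop
  · simp
  rcases le_or_gt c 0 with hc0 | hc0
  · simp [ENNReal.ofReal_eq_zero.mpr hc0]
  have hmes_pos : 0 < Γ.mes F := Finset.sum_pos (fun e _ => Γ.len_pos e) hF
  have hmes_le : Γ.mes F ≤ S.toReal * F.card := by
    calc Γ.mes F ≤ ∑ _e ∈ F, S.toReal :=
          Finset.sum_le_sum fun e he => (ENNReal.ofReal_le_iff_le_toReal hStop).mp (hS e he)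
      _ = S.toReal * F.card := by rw [Finset.sum_const, nsmul_eq_mul, mul_comm]
  refine ENNReal.div_le_of_le_mul ?_
  rw [← ENNReal.ofReal_toReal hStop,
    ← ENNReal.ofReal_mul (div_nonneg (Γ.degBdry_nonneg F) hmes_pos.le)]
  refine ENNReal.ofReal_le_ofReal ?_
  rw [div_mul_eq_mul_div, le_div_iff₀ hmes_pos]
  calc c * Γ.mes F ≤ c * (S.toReal * F.card) := mul_le_mul_of_nonneg_left hmes_le hc0.le
    _ = S.toReal * (c * F.card) := by ring
    _ ≤ S.toReal * Γ.degBdry F :=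
        mul_le_mul_of_nonneg_left (Γ.mul_card_le_degBdry hplus hc) ENNReal.toReal_nonneg
    _ = Γ.degBdry F * S.toReal := mul_comm _ _

lemma ofReal_sInf_Kcomb_div_le_alphaEssEnn (hplus : ∀ v, (Γ.plusE v).Nonempty)
    (W : Finset Γ.V) (W' : Finset Γ.E) :
    ENNReal.ofReal (sInf (Γ.Kcomb '' (↑W : Set Γ.V)ᶜ)) /
      (⨆ e : {e : Γ.E // e ∉ W'}, ENNReal.ofReal (Γ.len e)) ≤ Γ.alphaEssEnn := by
  by_cases hbdd : BddBelow (Γ.Kcomb '' (↑W : Set Γ.V)ᶜ)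
  swap
  · simp [Real.sInf_of_not_bddBelow hbdd]
  refine le_iSup_of_le (W' ∪ W.biUnion fun v => (Γ.locfin v).toFinset) (le_iInf₂ fun Y hY => ?_)
  obtain ⟨⟨hYne, -⟩, hdisj⟩ := hY
  rw [Finset.disjoint_union_right] at hdisj
  refine Γ.ofReal_div_le_ofReal_degBdry_div_mes hYne (fun v _ => hplus v)
    (fun v hv => csInf_le hbdd ⟨v, fun hvW => ?_, rfl⟩)
    fun e he => le_iSup_of_le ⟨e, Finset.disjoint_left.mp hdisj.1 he⟩ le_rfl
  obtain ⟨e, he, hev⟩ := Γ.exists_mem_star_of_mem_vertsOf hv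
  exact Finset.disjoint_left.mp hdisj.2 he
    (Finset.mem_biUnion.mpr ⟨v, hvW, (Γ.locfin v).mem_toFinset.mpr hev⟩)

lemma ofReal_KcombLiminf_div_le_alphaEssEnn (hplus : ∀ v, (Γ.plusE v).Nonempty) :
    ENNReal.ofReal Γ.KcombLiminf / Γ.ellSupEssEnn ≤ Γ.alphaEssEnn := by
  have hliminf : ENNReal.ofReal Γ.KcombLiminf =
      ⨆ W : Finset Γ.V, ENNReal.ofReal (sInf (Γ.Kcomb '' (↑W : Set Γ.V)ᶜ)) :=
    Monotone.map_ciSup_of_continuousAt ENNReal.continuous_ofReal.continuousAt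
      ENNReal.ofReal_mono ⟨1, Set.forall_mem_range.mpr Γ.sInf_Kcomb_compl_le_one⟩
  rw [hliminf, ellSupEssEnn, div_eq_mul_inv, ENNReal.inv_iInf, ENNReal.iSup_mul]
  refine iSup_le fun W => ?_
  rw [ENNReal.mul_iSup]
  refine iSup_le fun W' => ?_
  rw [← div_eq_mul_inv]
  exact Γ.ofReal_sInf_Kcomb_div_le_alphaEssEnn hplus W W'

lemma isFinSubgraph_singleton (e : Γ.E) : Γ.IsFinSubgraph {e} := by
  refine ⟨Finset.singleton_nonempty e, ?_⟩
  have hverts : ∀ x, x ∈ Γ.vertsOf {e} ↔ x = (Γ.ends e).1 ∨ x = (Γ.ends e).2 := by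
    simp [vertsOf]
  rw [SubConn, SimpleGraph.connected_iff_exists_forall_reachable]
  refine ⟨⟨_, (hverts _).mpr (Or.inl rfl)⟩, fun x => ?_⟩
  rcases (hverts x).mp x.2 with hx | hx
  · rw [show x = ⟨_, (hverts _).mpr (Or.inl rfl)⟩ from Subtype.ext hx]
  · rw [show x = ⟨_, (hverts _).mpr (Or.inr rfl)⟩ from Subtype.ext hx]
    exact SimpleGraph.Adj.reachable ⟨Γ.no_loops e, Or.inl ⟨e, Finset.mem_singleton_self e, rfl⟩⟩

lemma ofReal_degBdry_div_mes_singleton_le (e : Γ.E) :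
    ENNReal.ofReal (Γ.degBdry {e} / Γ.mes {e}) ≤ 2 / ENNReal.ofReal (Γ.len e) := by
  rw [mes, Finset.sum_singleton, ENNReal.ofReal_div_of_pos (Γ.len_pos e)]
  gcongr
  simpa using ENNReal.ofReal_le_ofReal (Γ.degBdry_le_two_mul_card {e})

lemma alphaEssEnn_le_two_div_ellSupEssEnn : Γ.alphaEssEnn ≤ 2 / Γ.ellSupEssEnn := by
  refine iSup_le fun W => ?_
  calc (⨅ (F : Finset Γ.E) (_ : Γ.IsFinSubgraph F ∧ Disjoint F W),
        ENNReal.ofReal (Γ.degBdry F / Γ.mes F))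
      ≤ ⨅ e : {e : Γ.E // e ∉ W}, 2 / ENNReal.ofReal (Γ.len e) :=
        le_iInf fun e => iInf₂_le_of_le {e.1}
          ⟨Γ.isFinSubgraph_singleton e, Finset.disjoint_singleton_left.mpr e.2⟩
          (Γ.ofReal_degBdry_div_mes_singleton_le e)
    _ = 2 / ⨆ e : {e : Γ.E // e ∉ W}, ENNReal.ofReal (Γ.len e) := by
        simp only [div_eq_mul_inv, ENNReal.inv_iSup]
        exact (ENNReal.mul_iInf_of_ne two_ne_zero ENNReal.ofNat_ne_top).symm
    _ ≤ 2 / Γ.ellSupEssEnn := ENNReal.div_le_div_left (iInf_le _ W) 2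

end MetricGraph

/-- **Lemma 6.5 (second part).** If `K(v) > 0` for every vertex `v` (in
particular `E_v⁺ ≠ ∅`, and hence `K_comb(v) > 0` for all `v`), then
`(liminf_v K_comb(v))/ℓ*_ess(G) ≤ α_ess(G) ≤ 2/ℓ*_ess(G)` in `[0,∞]`,
with the convention `1/0 = +∞`. -/
theorem alphaEss_comb_curvature_bounds (Γ : MetricGraph)
    (h : ∀ v : Γ.V, (Γ.plusE v).Nonempty ∧ 0 < Γ.Kcurv v) :
    ENNReal.ofReal Γ.KcombLiminf / Γ.ellSupEssEnn ≤ Γ.alphaEssEnn ∧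
    Γ.alphaEssEnn ≤ 2 / Γ.ellSupEssEnn :=
  ⟨Γ.ofReal_KcombLiminf_div_le_alphaEssEnn fun v => (h v).1,
    Γ.alphaEssEnn_le_two_div_ellSupEssEnn⟩
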